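/- Let m > 0 and H₀ > 0, and for ℓ ∈ ℝ define G(r) = H₀²·r − m/r² + (1 − 3m/r)·ℓ²/r³. There exist ℓ ∈ ℝ and r_c > 2m with G(r_c) = 0 and G'(r_c) < 0 if and only if m·H₀ < 2/(75√3). Moreover, whenever G(r_c) = 0 and G'(r_c) < 0, the radius satisfies 6m < r_c < r₊, where r₊ is the larger positive root of 1 − 2m/r − r²H₀² = 0. -/

import Mathlib

open Real

/-!
Clearing denominators, `r⁴ G(r) = H²r⁵ − m r² + (r − 3m) ℓ²` and
`r⁵ G'(r) = H²r⁵ + 2m r² + (12m − 3r) ℓ²`. Eliminating `ℓ²` between them, a stable circular orbit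
exists at `r > 2m` iff `3m < r`, `H²r³ < m` and `P(r) = H²r³(4r − 15m) − m(r − 6m) < 0`.
The last two force `r > 6m`, and then `H² < m(r − 6m) / (r³(4r − 15m)) ≤ 4 / (16875 m²)`, with
equality in the second step exactly at `r = 15m/2`; this radius witnesses the converse.
The cubic `r − 2m − H²r³` is positive at a stable radius and nonpositive beyond its root `r₊ > 3m`.
-/

namespace SdS

variable {m H ℓ r : ℝ}

/-- Its zeros are the radii of circular orbits of angular momentum `ℓ`. -/
noncomputable def G (m H ℓ r : ℝ) : ℝ := H^2*r - m/r^2 + (1 - 3*m/r)*ℓ^2/r^3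

/-- The sign of this polynomial decides the stability of the circular orbit at `r`. -/
def stabilityPoly (m H r : ℝ) : ℝ := 4*H^2*r^4 - 15*m*H^2*r^3 - m*r + 6*m^2

theorem hasDerivAt_G (m H ℓ : ℝ) (hr : r ≠ 0) :
    HasDerivAt (G m H ℓ) (H^2 + 2*m/r^3 + (12*m - 3*r)*ℓ^2/r^5) r := by
  have hcentrifugal :=
    ((((hasDerivAt_const r (3*m)).fun_div (hasDerivAt_id' r) hr).const_sub 1).mul_const (ℓ^2)
      ).fun_div (hasDerivAt_pow 3 r) (pow_ne_zero 3 hr)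
  refine ((((hasDerivAt_id' r).const_mul (H^2)).sub
    ((hasDerivAt_const r m).fun_div (hasDerivAt_pow 2 r) (pow_ne_zero 2 hr))).add
    hcentrifugal).congr_deriv ?_
  field_simp
  ring

theorem G_eq_zero_iff (hr : r ≠ 0) :
    G m H ℓ r = 0 ↔ H^2*r^5 - m*r^2 + (r - 3*m)*ℓ^2 = 0 := by
  have h : G m H ℓ r * r^4 = H^2*r^5 - m*r^2 + (r - 3*m)*ℓ^2 := by
    unfold G
    field_simp
  rw [← h, mul_eq_zero, or_iff_left (pow_ne_zero 4 hr)]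

theorem deriv_G_neg_iff (hr : 0 < r) :
    deriv (G m H ℓ) r < 0 ↔ H^2*r^5 + 2*m*r^2 + (12*m - 3*r)*ℓ^2 < 0 := by
  have h : deriv (G m H ℓ) r * r^5 = H^2*r^5 + 2*m*r^2 + (12*m - 3*r)*ℓ^2 := by
    rw [(hasDerivAt_G m H ℓ hr.ne').deriv]
    field_simp
  rw [← h]
  exact ⟨fun hd => mul_neg_of_neg_of_pos hd (pow_pos hr 5),
    fun hd => neg_of_mul_neg_left hd (pow_pos hr 5).le⟩

/-- Eliminating `ℓ²` between the two cleared conditions. -/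
theorem sq_mul_stabilityPoly (m H ℓ r : ℝ) :
    r^2 * stabilityPoly m H r = (r - 3*m) * (H^2*r^5 + 2*m*r^2 + (12*m - 3*r)*ℓ^2)
      + (3*r - 12*m) * (H^2*r^5 - m*r^2 + (r - 3*m)*ℓ^2) := by
  unfold stabilityPoly
  ring

theorem exists_stable_circular_iff (hm : 0 < m) (hr : 2*m < r) :
    (∃ ℓ, G m H ℓ r = 0 ∧ deriv (G m H ℓ) r < 0) ↔
      3*m < r ∧ H^2*r^3 < m ∧ stabilityPoly m H r < 0 := by
  have hr0 : 0 < r := by linarith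
  simp only [G_eq_zero_iff hr0.ne', deriv_G_neg_iff hr0]
  constructor
  · rintro ⟨ℓ, hE, hD⟩
    have hcross : (12*m - 3*r)*ℓ^2 < 0 := by nlinarith [pow_pos hr0 5, pow_pos hr0 2]
    have h4 : 4*m < r := by
      by_contra! h
      nlinarith [sq_nonneg ℓ]
    have hℓ : 0 < ℓ^2 := by nlinarith
    have hH : H^2*r^3 < m := by nlinarith [pow_pos hr0 2]
    refine ⟨by linarith, hH, ?_⟩
    have := sq_mul_stabilityPoly m H ℓ r
    rw [hE, mul_zero, add_zero] at this
    nlinarith [pow_pos hr0 2, mul_neg_of_pos_of_neg (by linarith : 0 < r - 3*m) hD]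
  · rintro ⟨h3, hH, hP⟩
    set L := r^2*(m - H^2*r^3)/(r - 3*m)
    have hL : (r - 3*m) * L = r^2*(m - H^2*r^3) := mul_div_cancel₀ _ (by linarith)
    have hL0 : 0 ≤ L := by
      have : 0 < m - H^2*r^3 := by linarith
      have : 0 < r - 3*m := by linarith
      positivity
    have hE : H^2*r^5 - m*r^2 + (r - 3*m)*√L^2 = 0 := by
      rw [sq_sqrt hL0]
      linear_combination hL
    refine ⟨√L, hE, ?_⟩
    have := sq_mul_stabilityPoly m H (√L) r
    rw [hE, mul_zero, add_zero] at this
    nlinarith [mul_neg_of_pos_of_neg (pow_pos hr0 2) hP]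

theorem six_mul_lt_of_stabilityPoly_neg (hm : 0 < m) (h3 : 3*m ≤ r) (hH : H^2*r^3 ≤ m)
    (hP : stabilityPoly m H r < 0) : 6*m < r := by
  unfold stabilityPoly at hP
  have hH0 : 0 ≤ H^2*r^3 := mul_nonneg (sq_nonneg H) (pow_nonneg (by linarith) 3)
  rcases le_or_gt (15*m) (4*r) with h | h
  · nlinarith [mul_nonneg hH0 (by linarith : 0 ≤ 4*r - 15*m)]
  · nlinarith [mul_le_mul_of_nonneg_right hH (by linarith : 0 ≤ 15*m - 4*r)]

/-- `m (r - 6m) / (r³ (4r - 15m))` is maximal at `r = 15m/2`. -/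
theorem isco_bound_factorization (m r : ℝ) :
    4*r^3*(4*r - 15*m) - 16875*m^3*(r - 6*m) = (2*r - 15*m)^2*(4*r^2 + 45*m*r + 450*m^2) := by
  ring

theorem sq_lt_of_stabilityPoly_neg (hm : 0 < m) (hr : 15*m < 4*r)
    (hP : stabilityPoly m H r < 0) : 16875*(m*H)^2 < 4 := by
  unfold stabilityPoly at hP
  have hr0 : 0 < r := by linarith
  have hK : 0 < m*(r^3*(4*r - 15*m)) := mul_pos hm (mul_pos (pow_pos hr0 3) (by linarith))
  have hmax : 16875*m^3*(r - 6*m) ≤ 4*r^3*(4*r - 15*m) := by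
    nlinarith [isco_bound_factorization m r, mul_nonneg (sq_nonneg (2*r - 15*m))
      (by nlinarith [mul_pos hm hr0] : 0 ≤ 4*r^2 + 45*m*r + 450*m^2)]
  have hscaled : 16875*m^3*(H^2*r^3*(4*r - 15*m)) < 16875*m^3*(m*(r - 6*m)) :=
    mul_lt_mul_of_pos_left (by linarith) (by positivity)
  refine lt_of_mul_lt_mul_right ?_ hK.le
  nlinarith

theorem stabilityPoly_fifteen_halves (m H : ℝ) :
    stabilityPoly m H (15*m/2) = 3*m^2*(16875*(m*H)^2 - 4)/8 := by
  unfold stabilityPoly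
  ring

theorem lt_two_div_iff {x : ℝ} (hx : 0 ≤ x) : x < 2/(75*√3) ↔ 16875*x^2 < 4 := by
  have hsq : (2/(75*√3))^2 = 4/16875 := by
    rw [div_pow, mul_pow, sq_sqrt (by norm_num)]
    norm_num
  rw [← pow_lt_pow_iff_left₀ hx (by positivity) two_ne_zero, hsq]
  constructor <;> intro h <;> linarith

theorem lt_of_cosmological_horizon {rp : ℝ} (hm : 0 ≤ m) (h3 : 3*m < rp)
    (hp : 1 - 2*m/rp - rp^2*H^2 = 0) (hr : 0 < r - 2*m - H^2*r^3) : r < rp := by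
  have hrp : 0 < rp := by linarith
  have hp' : rp - 2*m - H^2*rp^3 = 0 := by
    field_simp at hp
    linear_combination hp
  by_contra! hle
  have hfactor : rp*(r - 2*m - H^2*r^3)
      = -(H^2*rp*(r - rp)^2*(r + 2*rp)) - (r - rp)*(2*rp - 6*m) := by
    linear_combination (3*r - 2*rp) * hp'
  have : 0 ≤ H^2*rp*(r - rp)^2*(r + 2*rp) := by
    have : 0 ≤ r + 2*rp := by linarith
    positivity
  nlinarith [mul_nonneg (by linarith : 0 ≤ r - rp) (by linarith : 0 ≤ 2*rp - 6*m), mul_pos hrp hr]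

end SdS

theorem sds_stable_circular_orbits
    (m H₀ : ℝ) (hm : 0 < m) (hH₀ : 0 < H₀) :
    ((∃ ℓ rc : ℝ, 2*m < rc ∧
        H₀^2*rc - m/rc^2 + (1 - 3*m/rc)*ℓ^2/rc^3 = 0 ∧
        deriv (fun ρ : ℝ => H₀^2*ρ - m/ρ^2 + (1 - 3*m/ρ)*ℓ^2/ρ^3) rc < 0)
      ↔ m*H₀ < 2/(75*Real.sqrt 3)) ∧
    (∀ ℓ rc rp : ℝ, 2*m < rc →
      H₀^2*rc - m/rc^2 + (1 - 3*m/rc)*ℓ^2/rc^3 = 0 →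
      deriv (fun ρ : ℝ => H₀^2*ρ - m/ρ^2 + (1 - 3*m/ρ)*ℓ^2/ρ^3) rc < 0 →
      3*m < rp → 1 - 2*m/rp - rp^2*H₀^2 = 0 →
      6*m < rc ∧ rc < rp) := by
  rw [SdS.lt_two_div_iff (mul_pos hm hH₀).le]
  refine ⟨⟨?_, fun hmH => ?_⟩, ?_⟩
  · rintro ⟨ℓ, rc, h2, hG, hD⟩
    obtain ⟨h3, hH, hP⟩ := (SdS.exists_stable_circular_iff hm h2).1 ⟨ℓ, hG, hD⟩
    have h6 := SdS.six_mul_lt_of_stabilityPoly_neg hm h3.le hH.le hP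
    exact SdS.sq_lt_of_stabilityPoly_neg hm (by linarith) hP
  · have hP : SdS.stabilityPoly m H₀ (15*m/2) < 0 := by
      rw [SdS.stabilityPoly_fifteen_halves]
      have : 0 < m^2 := by positivity
      nlinarith
    have hH : H₀^2*(15*m/2)^3 < m := by nlinarith
    obtain ⟨ℓ, hG, hD⟩ := (SdS.exists_stable_circular_iff hm (by linarith)).2 ⟨by linarith, hH, hP⟩
    exact ⟨ℓ, 15*m/2, by linarith, hG, hD⟩
  · intro ℓ rc rp h2 hG hD h3 hp
    obtain ⟨h3c, hH, hP⟩ := (SdS.exists_stable_circular_iff hm h2).1 ⟨ℓ, hG, hD⟩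
    exact ⟨SdS.six_mul_lt_of_stabilityPoly_neg hm h3c.le hH.le hP,
      SdS.lt_of_cosmological_horizon hm.le h3 hp (by linarith)⟩
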